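/- Let v_1,...,v_N be pairwise distinct elements of a field. Define the lower triangular N×N Stanley matrix A with entries A_{k,l} = a_{k−l} for k ≥ l and 0 otherwise, where a_0 = 1 and a_j = (−1)^j σ_{N,j} (the j-th elementary symmetric polynomial of v_1,...,v_N). Define W to be the N×N matrix with W_{i,j} = v_i^{N−j} / λ_i where λ_i = ∏_{k≠i}(v_i − v_k). Then V^{-1} = W·A, where V is the Vandermonde matrix with V_{k,j} = v_j^{k-1}. -/

import Mathlib

/-!
Write `P = ∏ₖ (X - vₖ)`. The `i`-th row of `(Vᵀ)⁻¹` is the coefficient vector of the Lagrange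
basis polynomial `Lᵢ = λᵢ⁻¹ • (P /ₘ (X - vᵢ))`, since `Lᵢ (vₘ) = δᵢₘ`. Synthetic division writes
the coefficients of `P /ₘ (X - vᵢ)` as the row vector `(vᵢ ^ (N - 1 - j))ⱼ` times the Stanley
matrix of `P`, and by Vieta the entries of that matrix are `(-1) ^ m σ_{N,m}`.
-/

open Matrix

/-- `esymm v j`: the `j`-th elementary symmetric polynomial in `v`. -/
def esymm {K : Type*} [Field K] {N : ℕ} (v : Fin N → K) (j : ℕ) : K :=
  ∑ t ∈ Finset.univ.powersetCard j, ∏ k ∈ t, v k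

open Polynomial Finset Lagrange

section CommRing

variable {R : Type*} [CommRing R]

-- Entry `(j, l)` is `a_{j-l}`, the coefficient of `X ^ (n - (j - l))` in `p`.
def stanleyMatrix (p : R[X]) (n : ℕ) : Matrix (Fin n) (Fin n) R :=
  Matrix.of fun j l => if (l : ℕ) ≤ j then p.coeff (n - j + l) else 0

theorem stanleyMatrix_apply (p : R[X]) (n : ℕ) (j l : Fin n) :
    stanleyMatrix p n j l = if (l : ℕ) ≤ j then p.coeff (n - j + l) else 0 := rfl

theorem sum_pow_mul_stanleyMatrix {p : R[X]} {n : ℕ} (hp : p.natDegree ≤ n) (a : R)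
    (l : Fin n) :
    ∑ j : Fin n, a ^ (n - 1 - j) * stanleyMatrix p n j l = (p /ₘ (X - C a)).coeff l := by
  have hext : ∑ t ∈ Icc ((l : ℕ) + 1) p.natDegree, a ^ (t - (l + 1)) * p.coeff t
      = ∑ t ∈ Icc ((l : ℕ) + 1) n, a ^ (t - (l + 1)) * p.coeff t := by
    refine sum_subset (Icc_subset_Icc_right hp) fun t _ ht => ?_
    rw [coeff_eq_zero_of_natDegree_lt (by simp_all), mul_zero]
  simp only [stanleyMatrix_apply, mul_ite, mul_zero]
  rw [coeff_divByMonic_X_sub_C, hext, Fin.sum_univ_eq_sum_range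
    (fun j => if (l : ℕ) ≤ j then a ^ (n - 1 - j) * p.coeff (n - j + l) else 0), ← sum_filter]
  refine sum_nbij' (fun j => n - j + l) (fun t => n + l - t) ?_ ?_ ?_ ?_ ?_ <;>
    intro j hj <;> simp only [mem_filter, mem_range, mem_Icc] at hj ⊢ <;> try omega
  congr 2
  omega

theorem coeff_mul_vandermonde_transpose {ι : Type*} {n : ℕ} (p : ι → R[X])
    (hp : ∀ i, (p i).natDegree < n) (v : Fin n → R) :
    Matrix.of (fun i (l : Fin n) => (p i).coeff l) * (vandermonde v)ᵀ =
      Matrix.of fun i m => (p i).eval (v m) := by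
  ext i m
  rw [Matrix.mul_apply, of_apply, eval_eq_sum_range' (hp i), ← Fin.sum_univ_eq_sum_range]
  simp [vandermonde_apply]

end CommRing

section Field

variable {K : Type*} [Field K]

theorem coeff_nodal_univ {N : ℕ} (v : Fin N → K) {l : ℕ} (hl : l ≤ N) :
    (nodal univ v).coeff l = (-1) ^ (N - l) * esymm v (N - l) := by
  have h := Multiset.prod_X_sub_C_coeff (univ.val.map v) (k := l) (by simpa using hl)
  rw [Multiset.map_map, Multiset.card_map, card_val, card_univ, Fintype.card_fin,
    Finset.esymm_map_val] at h
  exact h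

theorem stanleyMatrix_nodal_univ {N : ℕ} (v : Fin N → K) (j l : Fin N) :
    stanleyMatrix (nodal univ v) N j l =
      if (l : ℕ) ≤ j then (-1) ^ ((j : ℕ) - l) * esymm v ((j : ℕ) - l) else 0 := by
  rw [stanleyMatrix_apply]
  split_ifs with hlj
  · rw [coeff_nodal_univ v (by omega)]
    congr 2 <;> omega
  · rfl

theorem of_eval_basis_eq_one {ι : Type*} [Fintype ι] [DecidableEq ι] {v : ι → K}
    (hv : Function.Injective v) :
    Matrix.of (fun i m => (Lagrange.basis univ v i).eval (v m)) = 1 := by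
  ext i m
  rw [of_apply, Matrix.one_apply]
  split_ifs with h
  · rw [h, eval_basis_self hv.injOn (mem_univ m)]
  · exact eval_basis_of_ne h (mem_univ m)

end Field

/-- The Vandermonde inverse factorization `V⁻¹ = W·A` (with
`V_{k,j} = v_j^{k-1}`, the Stanley matrix `A` with entries `a_{k−l}`,
`a_m = (−1)^m σ_{N,m}`, and `W_{i,j} = vᵢ^{N−j}/λᵢ`; all 0-based). -/
theorem inverse_vandermonde_factorization {K : Type*} [Field K] (N : ℕ)
    (v : Fin N → K) (hv : Function.Injective v)
    (A W : Matrix (Fin N) (Fin N) K)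
    (hA : ∀ k l : Fin N, A k l =
      if (l : ℕ) ≤ (k : ℕ) then (-1 : K) ^ ((k : ℕ) - (l : ℕ)) * esymm v ((k : ℕ) - (l : ℕ)) else 0)
    (hW : ∀ i j : Fin N, W i j =
      v i ^ (N - 1 - (j : ℕ)) / ∏ k ∈ Finset.univ.erase i, (v i - v k)) :
    ((Matrix.vandermonde v)ᵀ)⁻¹ = W * A := by
  have hA' : A = stanleyMatrix (nodal univ v) N := by
    ext j l
    rw [hA, stanleyMatrix_nodal_univ]
  have hWA : W * A = Matrix.of fun i (l : Fin N) => (Lagrange.basis univ v i).coeff l := by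
    ext i l
    rw [of_apply, basis_eq_prod_sub_inv_mul_nodal_div (mem_univ i),
      ← divByMonic_eq_div _ (monic_X_sub_C _), coeff_C_mul,
      ← sum_pow_mul_stanleyMatrix (natDegree_nodal.trans (card_fin N)).le,
      Matrix.mul_apply, mul_sum, hA']
    refine sum_congr rfl fun j _ => ?_
    rw [hW, nodalWeight, prod_inv_distrib, div_eq_inv_mul, mul_assoc]
  have hdeg : ∀ i, (Lagrange.basis univ v i).natDegree < N := fun i => by
    rw [natDegree_basis hv.injOn (mem_univ i), card_univ, Fintype.card_fin]
    exact Nat.sub_lt i.pos one_pos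
  apply Matrix.inv_eq_left_inv
  rw [hWA, coeff_mul_vandermonde_transpose _ hdeg, of_eval_basis_eq_one hv]
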